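/- Multiplier norm dominates sup norm at level 2: if α > −1 and (m_k) is a bounded complex sequence such that for all polynomials f, ∫_0^∞ |∑_k m_k f̂_α(k) L_k^α(x) e^{−x/2}|² x^{α+1} dx ≤ A² ∫_0^∞ |f(x)e^{−x/2}|² x^{α+1} dx, then sup_k |m_k| ≤ C·A for a constant C depending only on α. -/

import Mathlib

open Finset MeasureTheory

/-- The generalized Laguerre polynomial `L_n^α(x) = ∑_{j=0}^n binom(n+α, n−j) (−x)^j / j!`. -/
noncomputable def laguerre (α : ℝ) (n : ℕ) (x : ℝ) : ℝ :=
  ∑ j ∈ Finset.range (n + 1),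
    Real.Gamma ((n : ℝ) + α + 1) /
      (Real.Gamma (α + (j : ℝ) + 1) * ((n - j).factorial : ℝ)) * (-x) ^ j / (j.factorial : ℝ)

/-- The Fourier–Laguerre coefficient `f̂_α(k) = ∫_0^∞ f(x) (L_k^α(x)/L_k^α(0)) x^α e^{−x} dx`. -/
noncomputable def lagCoeff (α : ℝ) (f : Polynomial ℝ) (k : ℕ) : ℝ :=
  ∫ x in Set.Ioi (0 : ℝ),
    f.eval x * (laguerre α k x / laguerre α k 0) * x ^ α * Real.exp (-x)

/-! Testing the multiplier inequality on `f = L_k^α` isolates `m_k`. By orthogonality of the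
Laguerre polynomials for the weight `x^α e^{-x}`, the Fourier–Laguerre coefficients of `L_k^α`
are `Γ(α+1) δ_{nk}`, so the inequality reads
`|m_k|² Γ(α+1)² ‖L_k^α e^{-x/2}‖² ≤ A² ‖L_k^α e^{-x/2}‖²`, whence `C = 1 / Γ(α+1)`.

Orthogonality comes from the moments: expanding `L_n^α` and integrating term by term,
`∫ x^i L_n^α(x) x^α e^{-x} dx` is `(-1)^n Γ(n+α+1)/n!` times the `n`-th forward difference at `0`
of `y ↦ Γ(α+1+y+i)/Γ(α+1+y)`, a monic polynomial of degree `i` in `y` (a Pochhammer symbol). It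
therefore vanishes for `i < n` and equals `(-1)^n Γ(n+α+1)` for `i = n`. -/

open Polynomial Set

theorem sum_range_neg_one_pow_mul_choose_mul {R : Type*} [CommRing R] (f : R → R) (n : ℕ) :
    ∑ j ∈ range (n + 1), (-1) ^ j * (n.choose j : R) * f j = (-1) ^ n * (fwdDiff 1)^[n] f 0 := by
  rw [fwdDiff_iter_eq_sum_shift, mul_sum]
  refine sum_congr rfl fun j hj => ?_
  have hsign : (-1 : R) ^ n * (-1) ^ (n - j) = (-1) ^ j := by
    rw [← pow_add, show n + (n - j) = j + 2 * (n - j) by grind, pow_add, pow_mul]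
    simp
  simp only [zsmul_eq_mul, nsmul_eq_mul, mul_one, zero_add]
  push_cast
  linear_combination (n.choose j * f j) * hsign.symm

theorem natDegree_ascPochhammer_comp_X_add_C {R : Type*} [Semiring R] [NoZeroDivisors R]
    [Nontrivial R] (i : ℕ) (c : R) : ((ascPochhammer R i).comp (X + C c)).natDegree = i := by
  rw [natDegree_comp, ascPochhammer_natDegree, natDegree_X_add_C, mul_one]

theorem Real.Gamma_add_nat_eq_mul_ascPochhammer {s : ℝ} (hs : 0 < s) (n : ℕ) :
    Real.Gamma (s + n) = Real.Gamma s * (ascPochhammer ℝ n).eval s := by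
  induction n with
  | zero => simp
  | succ n ih =>
    rw [Nat.cast_succ, ← add_assoc, Real.Gamma_add_one (by positivity), ih, ascPochhammer_succ_eval]
    ring

theorem integrableOn_rpow_mul_exp_neg {s : ℝ} (hs : -1 < s) :
    IntegrableOn (fun x : ℝ => x ^ s * Real.exp (-x)) (Ioi 0) := by
  simpa [mul_comm] using Real.GammaIntegral_convergent (s := s + 1) (by linarith)

theorem integral_rpow_mul_exp_neg {s : ℝ} (hs : -1 < s) :
    ∫ x in Ioi (0 : ℝ), x ^ s * Real.exp (-x) = Real.Gamma (s + 1) := by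
  simp [Real.Gamma_eq_integral (show 0 < s + 1 by linarith), mul_comm]

theorem eval_mul_rpow_mul_exp_neg_eq_sum {p : ℝ[X]} {N : ℕ} (hN : p.natDegree < N) (s : ℝ) {x : ℝ}
    (hx : 0 < x) :
    p.eval x * x ^ s * Real.exp (-x)
      = ∑ j ∈ range N, p.coeff j * (x ^ (s + j) * Real.exp (-x)) := by
  rw [eval_eq_sum_range' hN, sum_mul, sum_mul]
  refine sum_congr rfl fun j _ => ?_
  rw [Real.rpow_add hx, Real.rpow_natCast]
  ring

theorem integrableOn_eval_mul_rpow_mul_exp_neg (p : ℝ[X]) {s : ℝ} (hs : -1 < s) :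
    IntegrableOn (fun x : ℝ => p.eval x * x ^ s * Real.exp (-x)) (Ioi 0) := by
  refine IntegrableOn.congr_fun ?_
    (fun x hx => (eval_mul_rpow_mul_exp_neg_eq_sum p.natDegree.lt_succ_self s hx).symm)
    measurableSet_Ioi
  refine integrable_finsetSum _ fun j _ => (integrableOn_rpow_mul_exp_neg ?_).const_mul _
  have : (0 : ℝ) ≤ j := j.cast_nonneg
  linarith

theorem integral_eval_mul_rpow_mul_exp_neg {p : ℝ[X]} {N : ℕ} (hN : p.natDegree < N) {s : ℝ}
    (hs : -1 < s) :
    ∫ x in Ioi (0 : ℝ), p.eval x * x ^ s * Real.exp (-x)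
      = ∑ j ∈ range N, p.coeff j * Real.Gamma (s + j + 1) := by
  have hsj (j : ℕ) : -1 < s + j := by
    have : (0 : ℝ) ≤ j := j.cast_nonneg
    linarith
  rw [setIntegral_congr_fun measurableSet_Ioi fun x hx => eval_mul_rpow_mul_exp_neg_eq_sum hN s hx,
    integral_finsetSum _ fun j _ => (integrableOn_rpow_mul_exp_neg (hsj j)).const_mul _]
  refine sum_congr rfl fun j _ => ?_
  rw [integral_const_mul, integral_rpow_mul_exp_neg (hsj j)]

theorem integral_sq_abs_eval_mul_exp_pos {p : ℝ[X]} (hp : p ≠ 0) {s : ℝ} (hs : -1 < s) :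
    0 < ∫ x in Ioi (0 : ℝ), |p.eval x * Real.exp (-x / 2)| ^ 2 * x ^ s := by
  have hg (x : ℝ) : |p.eval x * Real.exp (-x / 2)| ^ 2 * x ^ s
      = (p ^ 2).eval x * x ^ s * Real.exp (-x) := by
    rw [sq_abs, mul_pow, eval_pow, ← Real.exp_nat_mul]
    ring_nf
  simp only [hg]
  rw [setIntegral_pos_iff_support_of_nonneg_ae ?_ (integrableOn_eval_mul_rpow_mul_exp_neg _ hs)]
  · have hroots : Ioi (0 : ℝ) \ {x | p.IsRoot x} ⊆
        Function.support (fun x => (p ^ 2).eval x * x ^ s * Real.exp (-x)) ∩ Ioi 0 := by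
      rintro x ⟨hx, hroot⟩
      refine ⟨?_, hx⟩
      have : 0 < x ^ s := Real.rpow_pos_of_pos hx s
      have : p.eval x ≠ 0 := hroot
      simp only [Function.mem_support, eval_pow]
      positivity
    refine lt_of_lt_of_le ?_ (measure_mono hroots)
    rw [measure_sdiff_null ((finite_setOfPred_isRoot hp).measure_zero _), Real.volume_Ioi]
    exact ENNReal.zero_lt_top
  · filter_upwards [self_mem_ae_restrict measurableSet_Ioi] with x hx
    have : 0 < x ^ s := Real.rpow_pos_of_pos hx s
    simp only [Pi.zero_apply, eval_pow]
    positivity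

theorem nat_add_add_one_pos {α : ℝ} (hα : -1 < α) (n : ℕ) : 0 < (n : ℝ) + α + 1 := by
  linarith [(n.cast_nonneg : (0 : ℝ) ≤ n)]

noncomputable def laguerrePoly (α : ℝ) (n : ℕ) : ℝ[X] :=
  ∑ j ∈ range (n + 1), C (Real.Gamma ((n : ℝ) + α + 1) /
      (Real.Gamma (α + (j : ℝ) + 1) * ((n - j).factorial : ℝ)) * (-1) ^ j / (j.factorial : ℝ)) *
    X ^ j

theorem eval_laguerrePoly (α : ℝ) (n : ℕ) (x : ℝ) : (laguerrePoly α n).eval x = laguerre α n x := by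
  simp only [laguerrePoly, laguerre, eval_finsetSum, eval_mul, eval_C, eval_pow, eval_X, neg_pow x]
  refine sum_congr rfl fun j _ => by ring

theorem natDegree_laguerrePoly_le (α : ℝ) (n : ℕ) : (laguerrePoly α n).natDegree ≤ n :=
  natDegree_sum_le_of_forall_le _ _ fun j hj =>
    (natDegree_C_mul_X_pow_le _ j).trans (Nat.lt_succ_iff.mp (mem_range.mp hj))

theorem coeff_laguerrePoly {α : ℝ} (n : ℕ) {j : ℕ} (hj : j ≤ n) :
    (laguerrePoly α n).coeff j = Real.Gamma ((n : ℝ) + α + 1) / n.factorial *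
      ((-1) ^ j * n.choose j / Real.Gamma (α + j + 1)) := by
  rw [laguerrePoly, finsetSum_coeff,
    sum_eq_single j (fun i _ hij => by simp [coeff_X_pow, hij.symm])
      (fun h => absurd (mem_range.mpr (Nat.lt_succ_of_le hj)) h)]
  simp only [coeff_C_mul_X_pow, if_true]
  have hfac : (n.choose j : ℝ) * j.factorial * (n - j).factorial = n.factorial := by
    exact_mod_cast Nat.choose_mul_factorial_mul_factorial hj
  have hchoose : (n.choose j : ℝ) ≠ 0 := by exact_mod_cast (Nat.choose_pos hj).ne'
  rw [← hfac]
  field_simp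

theorem laguerre_zero (α : ℝ) (n : ℕ) :
    laguerre α n 0 = Real.Gamma ((n : ℝ) + α + 1) / (Real.Gamma (α + 1) * n.factorial) := by
  rw [← eval_laguerrePoly, ← coeff_zero_eq_eval_zero, coeff_laguerrePoly n n.zero_le]
  simp only [pow_zero, Nat.choose_zero_right, Nat.cast_one, CharP.cast_eq_zero, add_zero]
  ring

theorem laguerre_zero_pos {α : ℝ} (hα : -1 < α) (n : ℕ) : 0 < laguerre α n 0 := by
  rw [laguerre_zero]
  have := Real.Gamma_pos_of_pos (nat_add_add_one_pos hα n)
  have := Real.Gamma_pos_of_pos (show 0 < α + 1 by linarith)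
  positivity

theorem laguerrePoly_ne_zero {α : ℝ} (hα : -1 < α) (n : ℕ) : laguerrePoly α n ≠ 0 := fun h => by
  simpa [← eval_laguerrePoly, h] using (laguerre_zero_pos hα n).ne'

theorem integral_pow_mul_laguerre {α : ℝ} (hα : -1 < α) (i n : ℕ) :
    ∫ x in Ioi (0 : ℝ), x ^ i * laguerre α n x * x ^ α * Real.exp (-x)
      = (-1) ^ n * (Real.Gamma ((n : ℝ) + α + 1) / n.factorial) *
        (fwdDiff 1)^[n] ((ascPochhammer ℝ i).comp (X + C (α + 1))).eval 0 := by
  have hαj (j : ℕ) : 0 < α + j + 1 := by linarith [nat_add_add_one_pos hα j]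
  calc ∫ x in Ioi (0 : ℝ), x ^ i * laguerre α n x * x ^ α * Real.exp (-x)
      = ∫ x in Ioi (0 : ℝ), (laguerrePoly α n).eval x * x ^ (α + i) * Real.exp (-x) := by
        refine setIntegral_congr_fun measurableSet_Ioi fun x hx => ?_
        rw [eval_laguerrePoly, Real.rpow_add hx, Real.rpow_natCast]
        ring
    _ = ∑ j ∈ range (n + 1), (laguerrePoly α n).coeff j * Real.Gamma (α + i + j + 1) :=
        integral_eval_mul_rpow_mul_exp_neg (Nat.lt_succ_of_le (natDegree_laguerrePoly_le α n))
          (by linarith [(hαj i)])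
    _ = Real.Gamma ((n : ℝ) + α + 1) / n.factorial * ∑ j ∈ range (n + 1),
          (-1) ^ j * (n.choose j : ℝ) *
            ((ascPochhammer ℝ i).comp (X + C (α + 1))).eval (j : ℝ) := by
        rw [mul_sum]
        refine sum_congr rfl fun j hj => ?_
        rw [coeff_laguerrePoly n (Nat.lt_succ_iff.mp (mem_range.mp hj)),
          show α + i + j + 1 = (α + j + 1) + i by ring,
          Real.Gamma_add_nat_eq_mul_ascPochhammer (hαj j), eval_comp, eval_add, eval_X, eval_C,
          show (j : ℝ) + (α + 1) = α + j + 1 by ring]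
        field_simp [(Real.Gamma_pos_of_pos (hαj j)).ne']
    _ = _ := by
        rw [sum_range_neg_one_pow_mul_choose_mul
          (eval · ((ascPochhammer ℝ i).comp (X + C (α + 1))))]
        ring

theorem integral_pow_mul_laguerre_of_lt {α : ℝ} (hα : -1 < α) {i n : ℕ} (h : i < n) :
    ∫ x in Ioi (0 : ℝ), x ^ i * laguerre α n x * x ^ α * Real.exp (-x) = 0 := by
  rw [integral_pow_mul_laguerre hα, fwdDiff_iter_eq_zero_of_degree_lt
    ((natDegree_ascPochhammer_comp_X_add_C i _).trans_lt h), Pi.zero_apply, mul_zero]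

theorem integral_pow_self_mul_laguerre {α : ℝ} (hα : -1 < α) (n : ℕ) :
    ∫ x in Ioi (0 : ℝ), x ^ n * laguerre α n x * x ^ α * Real.exp (-x)
      = (-1) ^ n * Real.Gamma ((n : ℝ) + α + 1) := by
  have hΔ := ((ascPochhammer ℝ n).comp (X + C (α + 1))).fwdDiff_iter_degree_eq_factorial
  rw [natDegree_ascPochhammer_comp_X_add_C,
    ((monic_ascPochhammer ℝ n).comp_X_add_C (α + 1)).leadingCoeff] at hΔ
  rw [integral_pow_mul_laguerre hα, hΔ, one_smul, Pi.natCast_apply]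
  field_simp [Nat.cast_ne_zero.mpr n.factorial_ne_zero]

theorem integral_eval_mul_laguerre {α : ℝ} (hα : -1 < α) {p : ℝ[X]} {N : ℕ}
    (hN : p.natDegree < N) (n : ℕ) :
    ∫ x in Ioi (0 : ℝ), p.eval x * laguerre α n x * x ^ α * Real.exp (-x)
      = ∑ i ∈ range N, p.coeff i *
          ∫ x in Ioi (0 : ℝ), x ^ i * laguerre α n x * x ^ α * Real.exp (-x) := by
  have hint (i : ℕ) :
      IntegrableOn (fun x => x ^ i * laguerre α n x * x ^ α * Real.exp (-x)) (Ioi 0) := by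
    refine (integrableOn_eval_mul_rpow_mul_exp_neg (X ^ i * laguerrePoly α n) hα).congr_fun
      (fun x _ => ?_) measurableSet_Ioi
    simp only [eval_mul, eval_pow, eval_X, eval_laguerrePoly]
  have hsum (x : ℝ) : p.eval x * laguerre α n x * x ^ α * Real.exp (-x)
      = ∑ i ∈ range N, p.coeff i * (x ^ i * laguerre α n x * x ^ α * Real.exp (-x)) := by
    simp only [eval_eq_sum_range' hN, sum_mul, mul_assoc]
  simp only [hsum]
  rw [integral_finsetSum _ fun i _ => (hint i).const_mul (p.coeff i)]
  exact sum_congr rfl fun i _ => integral_const_mul _ _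

theorem integral_eval_mul_laguerre_of_natDegree_lt {α : ℝ} (hα : -1 < α) {p : ℝ[X]} {n : ℕ}
    (hp : p.natDegree < n) :
    ∫ x in Ioi (0 : ℝ), p.eval x * laguerre α n x * x ^ α * Real.exp (-x) = 0 := by
  rw [integral_eval_mul_laguerre hα hp]
  exact sum_eq_zero fun i hi => by
    rw [integral_pow_mul_laguerre_of_lt hα (mem_range.mp hi), mul_zero]

theorem integral_laguerre_mul_laguerre_of_ne {α : ℝ} (hα : -1 < α) {k n : ℕ} (h : k ≠ n) :
    ∫ x in Ioi (0 : ℝ), laguerre α k x * laguerre α n x * x ^ α * Real.exp (-x) = 0 := by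
  wlog hlt : k < n generalizing k n
  · simpa only [mul_comm (laguerre α n _)] using this h.symm (by omega)
  simpa [eval_laguerrePoly] using
    integral_eval_mul_laguerre_of_natDegree_lt hα ((natDegree_laguerrePoly_le α k).trans_lt hlt)

theorem integral_laguerre_sq {α : ℝ} (hα : -1 < α) (n : ℕ) :
    ∫ x in Ioi (0 : ℝ), laguerre α n x * laguerre α n x * x ^ α * Real.exp (-x)
      = Real.Gamma ((n : ℝ) + α + 1) / n.factorial := by
  have h := integral_eval_mul_laguerre hα (Nat.lt_succ_of_le (natDegree_laguerrePoly_le α n)) n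
  simp only [eval_laguerrePoly] at h
  rw [h, sum_range_succ, sum_eq_zero fun i hi => by
      rw [integral_pow_mul_laguerre_of_lt hα (mem_range.mp hi), mul_zero],
    zero_add, integral_pow_self_mul_laguerre hα, coeff_laguerrePoly n le_rfl, Nat.choose_self,
    Nat.cast_one, mul_one, show α + n + 1 = n + α + 1 by ring]
  have hΓ := (Real.Gamma_pos_of_pos (nat_add_add_one_pos hα n)).ne'
  field_simp
  rw [← pow_mul, pow_mul', neg_one_sq, one_pow]

theorem lagCoeff_laguerrePoly {α : ℝ} (hα : -1 < α) (k n : ℕ) :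
    lagCoeff α (laguerrePoly α k) n = if n = k then Real.Gamma (α + 1) else 0 := by
  have h : lagCoeff α (laguerrePoly α k) n = (laguerre α n 0)⁻¹ *
      ∫ x in Ioi (0 : ℝ), laguerre α k x * laguerre α n x * x ^ α * Real.exp (-x) := by
    rw [lagCoeff, ← integral_const_mul]
    simp only [eval_laguerrePoly, div_eq_mul_inv]
    congr 1 with x
    ring
  split_ifs with hnk
  · subst hnk
    rw [h, integral_laguerre_sq hα, laguerre_zero]
    have hΓ := (Real.Gamma_pos_of_pos (nat_add_add_one_pos hα n)).ne'
    field_simp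
  · rw [h, integral_laguerre_mul_laguerre_of_ne hα (Ne.symm hnk), mul_zero]

theorem tsum_mul_lagCoeff_laguerrePoly {α : ℝ} (hα : -1 < α) (m : ℕ → ℂ) (k : ℕ) (x : ℝ) (c : ℂ) :
    ∑' n : ℕ, m n * (lagCoeff α (laguerrePoly α k) n : ℂ) * (laguerre α n x : ℂ) * c
      = m k * (Real.Gamma (α + 1) : ℂ) * (laguerre α k x : ℂ) * c := by
  rw [tsum_eq_single k fun n hn => by simp [lagCoeff_laguerrePoly hα, hn], lagCoeff_laguerrePoly hα,
    if_pos rfl]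

theorem multiplier_norm_dominates_sup (α : ℝ) (hα : -1 < α) :
    ∃ C : ℝ, 0 < C ∧ ∀ (m : ℕ → ℂ), (∃ M : ℝ, ∀ k, ‖m k‖ ≤ M) →
      ∀ A : ℝ, 0 ≤ A →
      (∀ f : Polynomial ℝ,
        (∫ x in Set.Ioi (0 : ℝ),
            ‖∑' k : ℕ, m k * (lagCoeff α f k : ℂ) * (laguerre α k x : ℂ) *
              (Real.exp (-x / 2) : ℂ)‖ ^ 2 * x ^ (α + 1))
          ≤ A ^ 2 * ∫ x in Set.Ioi (0 : ℝ),
              |f.eval x * Real.exp (-x / 2)| ^ 2 * x ^ (α + 1)) →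
      ∀ k : ℕ, ‖m k‖ ≤ C * A := by
  have hΓ : 0 < Real.Gamma (α + 1) := Real.Gamma_pos_of_pos (by linarith)
  refine ⟨(Real.Gamma (α + 1))⁻¹, inv_pos.mpr hΓ, fun m _ A hA hmult k => ?_⟩
  have hnorm (x : ℝ) : ‖m k * (Real.Gamma (α + 1) : ℂ) * (laguerre α k x : ℂ) *
      (Real.exp (-x / 2) : ℂ)‖ ^ 2 * x ^ (α + 1)
      = (‖m k‖ * Real.Gamma (α + 1)) ^ 2 *
        (|(laguerrePoly α k).eval x * Real.exp (-x / 2)| ^ 2 * x ^ (α + 1)) := by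
    simp only [norm_mul, Complex.norm_real, Real.norm_eq_abs, abs_mul, abs_of_pos hΓ,
      eval_laguerrePoly]
    ring
  have h := hmult (laguerrePoly α k)
  simp only [tsum_mul_lagCoeff_laguerrePoly hα, hnorm, integral_const_mul] at h
  have hsq := le_of_mul_le_mul_right h
    (integral_sq_abs_eval_mul_exp_pos (laguerrePoly_ne_zero hα k) (by linarith))
  rw [le_inv_mul_iff₀ hΓ, mul_comm]
  exact (pow_le_pow_iff_left₀ (by positivity) hA two_ne_zero).mp hsq
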